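/- Let V : ℝ → ℝ be bounded measurable, fix x ∈ ℝ and h > 0, and set v_n = (2n+1)πh. For the discrete singularity-free operator (B_d g)_n = i h Σ_{m∈ℤ} g_m ∫_{−1/(2h)}^{1/(2h)} D_V(y)·(e^{i(v_n − v_m)y} − e^{−i v_m y})/v_n dy, one has for every g ∈ ℓ²(ℤ) and every n ∈ ℤ the pointwise bound |(B_d g)_n| ≤ (2/|v_n|)·(h·∫_{−1/(2h)}^{1/(2h)} |D_V(y)|² dy)^{1/2} · ‖g‖_{ℓ²(ℤ)}. -/

import Mathlib

/-!
Since `v_n - v_m = 2πh (n - m)` and `v_m = 2πh m + πh`, the kernel factors as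
`e^{i(v_n - v_m)y} - e^{-i v_m y} = e^{-2πi m h y} (e^{i v_n y} - 1) e^{-iπhy}`, so the `m`-th
integral in `B_d` is, up to the factor `1 / (h v_n)`, the `m`-th Fourier coefficient on the
period interval `[-1/(2h), 1/(2h)]` of `G(y) = D_V(y) (e^{i v_n y} - 1) e^{-iπhy}`.
Cauchy–Schwarz in `ℓ²(ℤ)` and Parseval's identity for `G`, together with `|G| ≤ 2 |D_V|`,
give the bound.
-/

open MeasureTheory Real

/-- Velocity grid point `v_n = (2n+1)πh`. -/
noncomputable def vpt (h : ℝ) (n : ℤ) : ℝ := (2 * (n : ℝ) + 1) * π * h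

/-- The discrete singularity-free Wigner operator
`(B_d g)_n = i h Σ_m g_m ∫_{−1/(2h)}^{1/(2h)} D_V(y)
  (e^{i(v_n−v_m)y} − e^{−i v_m y})/v_n dy`. -/
noncomputable def Bd (V : ℝ → ℝ) (x h : ℝ) (g : ℤ → ℂ) (n : ℤ) : ℂ :=
  Complex.I * (h : ℂ) *
    ∑' m : ℤ, g m *
      ∫ y in Set.Icc (-(1 / (2 * h))) (1 / (2 * h)),
        ((V (x + y / 2) - V (x - y / 2) : ℝ) : ℂ) *
          (Complex.exp (Complex.I * ((vpt h n - vpt h m : ℝ) : ℂ) * (y : ℂ)) -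
            Complex.exp (-(Complex.I * ((vpt h m : ℝ) : ℂ) * (y : ℂ)))) /
          ((vpt h n : ℝ) : ℂ)

open Complex

theorem norm_tsum_mul_le_sqrt_mul_sqrt {ι R : Type*} [NormedRing R] {f g : ι → R}
    (hf : Summable fun i => ‖f i‖ ^ 2) (hg : Summable fun i => ‖g i‖ ^ 2) :
    ‖∑' i, f i * g i‖ ≤ √(∑' i, ‖f i‖ ^ 2) * √(∑' i, ‖g i‖ ^ 2) := by
  have hf' : Summable fun i => ‖f i‖ ^ (2 : ℝ) := by simpa only [Real.rpow_two] using hf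
  have hg' : Summable fun i => ‖g i‖ ^ (2 : ℝ) := by simpa only [Real.rpow_two] using hg
  obtain ⟨hsum, hholder⟩ := Real.summable_and_inner_le_Lp_mul_Lq_tsum_of_nonneg .two_two
    (fun i => norm_nonneg (f i)) (fun i => norm_nonneg (g i)) hf' hg'
  simp only [Real.rpow_two, ← Real.sqrt_eq_rpow] at hholder
  have hsum' : Summable fun i => ‖f i * g i‖ :=
    hsum.of_nonneg_of_le (fun _ => norm_nonneg _) fun _ => norm_mul_le _ _
  calc ‖∑' i, f i * g i‖ ≤ ∑' i, ‖f i * g i‖ := norm_tsum_le_tsum_norm hsum'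
    _ ≤ ∑' i, ‖f i‖ * ‖g i‖ := hsum'.tsum_le_tsum (fun _ => norm_mul_le _ _) hsum
    _ ≤ _ := hholder

theorem tsum_sq_fourierCoeffOn_le {a b C : ℝ} (hab : a < b) {F : ℝ → ℂ} {D : ℝ → ℝ}
    (hD : MemLp D 2 (volume.restrict (Set.Ioc a b)))
    (hF : AEStronglyMeasurable F (volume.restrict (Set.Ioc a b))) (hFD : ∀ y, ‖F y‖ ≤ C * |D y|) :
    Summable (fun i => ‖fourierCoeffOn hab F i‖ ^ 2) ∧
      ∑' i, ‖fourierCoeffOn hab F i‖ ^ 2 ≤ (b - a)⁻¹ * (C ^ 2 * ∫ y in a..b, D y ^ 2) := by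
  have hFL2 : MemLp F 2 (volume.restrict (Set.Ioc a b)) :=
    (hD.const_mul C).of_le hF (ae_of_all _ fun y => (hFD y).trans <| by
      rw [Real.norm_eq_abs, abs_mul]; gcongr; exact le_abs_self C)
  have hparseval := hasSum_sq_fourierCoeffOn hab hFL2
  refine ⟨hparseval.summable, hparseval.tsum_eq.trans_le ?_⟩
  rw [smul_eq_mul]
  refine mul_le_mul_of_nonneg_left ?_ (inv_nonneg.mpr (sub_nonneg.mpr hab.le))
  rw [← intervalIntegral.integral_const_mul, intervalIntegral.integral_of_le hab.le,
    intervalIntegral.integral_of_le hab.le]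
  refine integral_mono_of_nonneg (ae_of_all _ fun _ => by positivity)
    (hD.integrable_sq.const_mul _) (ae_of_all _ fun y => ?_)
  calc ‖F y‖ ^ 2 ≤ (C * |D y|) ^ 2 := pow_le_pow_left₀ (norm_nonneg _) (hFD y) 2
    _ = C ^ 2 * D y ^ 2 := by rw [mul_pow, sq_abs]

theorem cexp_vpt_sub_eq_fourier_mul {T h : ℝ} [Fact (0 < T)] (hTh : T * h = 1) (n m : ℤ)
    (y : ℝ) :
    cexp (I * ↑(vpt h n - vpt h m) * y) - cexp (-(I * ↑(vpt h m) * y)) =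
      fourier (-m) (y : AddCircle T) *
        ((cexp (I * ↑(vpt h n) * y) - 1) * cexp (-(I * ↑(π * h) * y))) := by
  obtain rfl : T = h⁻¹ := eq_inv_of_mul_eq_one_left hTh
  have hh : (h : ℂ) ≠ 0 := by exact_mod_cast right_ne_zero_of_mul_eq_one hTh
  rw [fourier_coe_apply, sub_one_mul, mul_sub, ← Complex.exp_add, ← Complex.exp_add,
    ← Complex.exp_add]
  congr 2 <;> push_cast [vpt] <;> field_simp <;> ring

noncomputable def bdProfile (D : ℝ → ℝ) (h : ℝ) (n : ℤ) (y : ℝ) : ℂ :=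
  D y * ((cexp (I * ↑(vpt h n) * y) - 1) * cexp (-(I * ↑(π * h) * y)))

theorem measurable_bdProfile {D : ℝ → ℝ} (hD : Measurable D) (h : ℝ) (n : ℤ) :
    Measurable (bdProfile D h n) := by
  unfold bdProfile
  fun_prop

theorem norm_bdProfile_le (D : ℝ → ℝ) (h : ℝ) (n : ℤ) (y : ℝ) :
    ‖bdProfile D h n y‖ ≤ 2 * |D y| := by
  have hunit : ∀ r : ℝ, ‖cexp (I * r * y)‖ = 1 ∧ ‖cexp (-(I * r * y))‖ = 1 := fun r => by
    simp [norm_exp]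
  calc ‖bdProfile D h n y‖ = |D y| * ‖cexp (I * ↑(vpt h n) * y) - 1‖ := by
        rw [bdProfile, norm_mul, norm_mul, norm_real, Real.norm_eq_abs, (hunit _).2, mul_one]
    _ ≤ |D y| * (‖cexp (I * ↑(vpt h n) * y)‖ + ‖(1 : ℂ)‖) := by gcongr; exact norm_sub_le _ _
    _ = 2 * |D y| := by rw [(hunit _).1, norm_one]; ring

theorem Bd_eq_tsum_fourierCoeffOn (V : ℝ → ℝ) (x : ℝ) {h : ℝ}
    (hab : -(1 / (2 * h)) < 1 / (2 * h)) (g : ℤ → ℂ) (n : ℤ) :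
    Bd V x h g n = I / vpt h n * ∑' m, g m *
      fourierCoeffOn hab (bdProfile (fun y => V (x + y / 2) - V (x - y / 2)) h n) m := by
  have hh : 0 < h := by linarith [one_div_pos.mp (neg_lt_self_iff.mp hab)]
  have hh' : (h : ℂ) ≠ 0 := by exact_mod_cast hh.ne'
  have : Fact (0 < 1 / (2 * h) - -(1 / (2 * h))) := ⟨sub_pos.mpr hab⟩
  have hTh : (1 / (2 * h) - -(1 / (2 * h))) * h = 1 := by field_simp; ring
  have hintegral : ∀ m : ℤ, ∫ y in Set.Icc (-(1 / (2 * h))) (1 / (2 * h)),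
      ((V (x + y / 2) - V (x - y / 2) : ℝ) : ℂ) *
        (cexp (I * ((vpt h n - vpt h m : ℝ) : ℂ) * y) - cexp (-(I * ((vpt h m : ℝ) : ℂ) * y))) /
          ((vpt h n : ℝ) : ℂ) =
      fourierCoeffOn hab (bdProfile (fun y => V (x + y / 2) - V (x - y / 2)) h n) m /
        (h * vpt h n) := by
    intro m
    have hfactor : ∀ y : ℝ, ((V (x + y / 2) - V (x - y / 2) : ℝ) : ℂ) *
        (cexp (I * ((vpt h n - vpt h m : ℝ) : ℂ) * y) - cexp (-(I * ((vpt h m : ℝ) : ℂ) * y))) =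
        fourier (-m) (y : AddCircle (1 / (2 * h) - -(1 / (2 * h)))) •
          bdProfile (fun y => V (x + y / 2) - V (x - y / 2)) h n y := fun y => by
      rw [cexp_vpt_sub_eq_fourier_mul hTh, smul_eq_mul, bdProfile]; ring
    rw [integral_div, fourierCoeffOn_eq_integral _ _ hab, intervalIntegral.integral_of_le hab.le,
      ← integral_Icc_eq_integral_Ioc, Complex.real_smul]
    simp only [hfactor]
    push_cast
    field_simp
    ring
  simp only [Bd, hintegral, ← tsum_mul_left]
  congr 1 with m
  field_simp

/-- Pointwise high-velocity bound for the discrete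
singularity-free operator:
`|(B_d g)_n| ≤ (2/|v_n|) (h ∫_{−1/(2h)}^{1/(2h)} |D_V(y)|² dy)^{1/2} ‖g‖_{ℓ²}`. -/
theorem stmt12 (V : ℝ → ℝ) (hVm : Measurable V) (hVb : ∃ c : ℝ, ∀ t : ℝ, |V t| ≤ c)
    (x h : ℝ) (hh : 0 < h) (g : ℤ → ℂ) (hg : Memℓp g 2) (n : ℤ) :
    ‖Bd V x h g n‖ ≤
      2 / |vpt h n| *
        Real.sqrt (h * ∫ y in Set.Icc (-(1 / (2 * h))) (1 / (2 * h)),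
            (V (x + y / 2) - V (x - y / 2)) ^ 2) *
        Real.sqrt (∑' m : ℤ, ‖g m‖ ^ 2) := by
  obtain ⟨c, hc⟩ := hVb
  set D : ℝ → ℝ := fun y => V (x + y / 2) - V (x - y / 2)
  have hab : -(1 / (2 * h)) < 1 / (2 * h) := neg_lt_self (by positivity)
  have hDm : Measurable D := by fun_prop
  have hDL2 : MemLp D 2 (volume.restrict (Set.Ioc (-(1 / (2 * h))) (1 / (2 * h)))) :=
    .of_bound hDm.aestronglyMeasurable (2 * c) <| ae_of_all _ fun y =>
      (abs_sub _ _).trans (by linarith [hc (x + y / 2), hc (x - y / 2)])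
  obtain ⟨hcoeff, hparseval⟩ := tsum_sq_fourierCoeffOn_le hab hDL2
    (measurable_bdProfile hDm h n).aestronglyMeasurable (norm_bdProfile_le D h n)
  have hlen : (1 / (2 * h) - -(1 / (2 * h)))⁻¹ = h := by field_simp; ring
  rw [hlen, intervalIntegral.integral_of_le hab.le, ← integral_Icc_eq_integral_Ioc] at hparseval
  have hg2 : Summable fun m => ‖g m‖ ^ 2 := by simpa using hg.summable (by norm_num)
  rw [Bd_eq_tsum_fourierCoeffOn V x hab, norm_mul, norm_div, norm_I, norm_real, Real.norm_eq_abs]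
  calc 1 / |vpt h n| * ‖∑' m, g m * fourierCoeffOn hab (bdProfile D h n) m‖
      ≤ 1 / |vpt h n| * (√(∑' m, ‖g m‖ ^ 2) *
          √(∑' m, ‖fourierCoeffOn hab (bdProfile D h n) m‖ ^ 2)) := by
        gcongr; exact norm_tsum_mul_le_sqrt_mul_sqrt hg2 hcoeff
    _ ≤ 1 / |vpt h n| * (√(∑' m, ‖g m‖ ^ 2) *
          √(h * (2 ^ 2 * ∫ y in Set.Icc (-(1 / (2 * h))) (1 / (2 * h)), D y ^ 2))) := by
        gcongr
    _ = _ := by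
        have hQ : 0 ≤ h * ∫ y in Set.Icc (-(1 / (2 * h))) (1 / (2 * h)), D y ^ 2 :=
          mul_nonneg hh.le (integral_nonneg fun y => sq_nonneg (D y))
        rw [mul_left_comm h, Real.sqrt_mul' _ hQ, Real.sqrt_sq zero_le_two]
        ring
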